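/- Let F, G ∈ ℂ[x,y,z] be homogeneous polynomials of degree 2 and let a, b ∈ ℂ ∖ {0}. Let M be the 3×2 matrix with rows (∂F/∂x, ∂G/∂x), (∂F/∂y, ∂G/∂y), (a·F, b·G). Assume that the set of points of ℙ²(ℂ) at which M has rank at most 1 (i.e. the common projective zeros of the three 2×2 minors of M) is finite. Then every triple (A, B, C) of homogeneous polynomials in ℂ[x,y,z] of degrees 3, 3, 2 respectively satisfying A·∂F/∂x + B·∂F/∂y + C·a·F = 0 and A·∂G/∂x + B·∂G/∂y + C·b·G = 0 is a scalar multiple of the syzygy s = ( (∂F/∂y)·bG − (∂G/∂y)·aF , −((∂F/∂x)·bG − (∂G/∂x)·aF) , (∂F/∂x)(∂G/∂y) − (∂F/∂y)(∂G/∂x) ); that is, there exists c ∈ ℂ with A = c·((∂F/∂y)·bG − (∂G/∂y)·aF), B = −c·((∂F/∂x)·bG − (∂G/∂x)·aF), and C = c·((∂F/∂x)(∂G/∂y) − (∂F/∂y)(∂G/∂x)). -/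

import Mathlib

/-!
Write `u₁ = (F_x, F_y, aF)` and `u₂ = (G_x, G_y, bG)` for the columns of `M`; then `s = u₁ × u₂`
and a syzygy `v = (A, B, C)` is a vector orthogonal to `u₁` and `u₂`, so `v × s = 0` by the
vector triple product. The entries of `s` have no common factor: an irreducible common factor is
homogeneous of positive degree, so it vanishes on infinitely many points of `ℙ²`, at all of which
the `2 × 2` minors of `M` vanish. In the factorial ring `ℂ[x, y, z]`, `v × s = 0` with `s` primitive
forces `v = c s` with `c` a polynomial, and comparing degrees makes `c` a constant.
-/

open MvPolynomial Matrix

namespace Polynomial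

theorem coeff_eq_zero_of_mul_eq_C_mul_X_pow {R : Type*} [CommRing R] [NoZeroDivisors R]
    {p q : R[X]} {c : R} {n k : ℕ} (h : p * q = C c * X ^ n) (hp : p ≠ 0) (hq : q ≠ 0)
    (hk : k ≠ p.natDegree) : p.coeff k = 0 := by
  have hc : c ≠ 0 := by rintro rfl; simp [hp, hq] at h
  have hdeg := natDegree_mul hp hq
  have htrail := natTrailingDegree_mul hp hq
  rw [h, natDegree_C_mul_X_pow n c hc] at hdeg
  rw [h, C_mul_X_pow_eq_monomial, natTrailingDegree_monomial hc] at htrail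
  have := natTrailingDegree_le_natDegree p
  have := natTrailingDegree_le_natDegree q
  rcases hk.lt_or_gt with hlt | hlt
  · exact coeff_eq_zero_of_lt_natTrailingDegree (by omega)
  · exact coeff_eq_zero_of_natDegree_lt hlt

end Polynomial

section Proportional

theorem mul_eq_mul_of_cross_eq_zero {R : Type*} [CommRing R] {v w : Fin 3 → R}
    (h : v ⨯₃ w = 0) (i j : Fin 3) : v i * w j = v j * w i := by
  have h0 := congrFun h 0
  have h1 := congrFun h 1
  have h2 := congrFun h 2
  simp only [cross_apply, cons_val, Pi.zero_apply, sub_eq_zero] at h0 h1 h2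
  fin_cases i <;> fin_cases j <;> grind

variable {R ι : Type*}

theorem exists_ne_zero_of_forall_dvd_isUnit [CommMonoidWithZero R] [Nontrivial R] {w : ι → R}
    (hw : ∀ d, (∀ i, d ∣ w i) → IsUnit d) : ∃ i, w i ≠ 0 := by
  by_contra! hw0
  exact not_isUnit_zero (hw 0 fun i => by rw [hw0 i])

variable [CommRing R] [IsDomain R] [UniqueFactorizationMonoid R]

theorem dvd_of_forall_dvd_mul {x y : R} {w : ι → R} (hw : ∀ d, (∀ i, d ∣ w i) → IsUnit d)
    (h : ∀ i, x ∣ y * w i) : x ∣ y := by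
  rcases eq_or_ne y 0 with rfl | hy
  · exact dvd_zero x
  obtain ⟨y', x', g, hrel, rfl, rfl⟩ := UniqueFactorizationMonoid.exists_reduced_factors y hy x
  have hg : g ≠ 0 := left_ne_zero_of_mul hy
  have hx' : IsUnit x' := hw x' fun i => hrel.symm.dvd_of_dvd_mul_left
    ((mul_dvd_mul_iff_left hg).mp (by simpa only [mul_assoc] using h i))
  exact mul_dvd_mul_left g hx'.dvd

theorem exists_eq_smul_of_mul_eq_mul {v w : ι → R} (hw : ∀ d, (∀ i, d ∣ w i) → IsUnit d)
    (h : ∀ i j, v i * w j = v j * w i) : ∃ c : R, v = c • w := by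
  obtain ⟨i, hi⟩ := exists_ne_zero_of_forall_dvd_isUnit hw
  obtain ⟨c, hc⟩ := dvd_of_forall_dvd_mul hw fun j => ⟨v j, by rw [h i j, mul_comm]⟩
  refine ⟨c, funext fun j => mul_right_cancel₀ hi ?_⟩
  calc v j * w i = v i * w j := (h i j).symm
    _ = (c • w) j * w i := by rw [hc, Pi.smul_apply, smul_eq_mul]; ring

end Proportional

namespace MvPolynomial

variable {R σ : Type*}

theorem IsHomogeneous.eval_smul [CommSemiring R] [Fintype σ] {φ : MvPolynomial σ R} {n : ℕ}
    (hφ : φ.IsHomogeneous n) (c : R) (v : σ → R) :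
    eval (c • v) φ = c ^ n * eval v φ := by
  rw [eval_eq', eval_eq', Finset.mul_sum]
  refine Finset.sum_congr rfl fun u hu => ?_
  have hdeg : ∑ i, u i = n := by
    rw [← hφ (mem_support_iff.mp hu), Finsupp.weight_apply, Finsupp.sum_fintype _ _ (by simp)]
    simp
  simp only [Pi.smul_apply, smul_eq_mul, mul_pow, Finset.prod_mul_distrib,
    Finset.prod_pow_eq_pow_sum, hdeg]
  ring

section Homogeneous

variable [CommRing R]

noncomputable def scaleVars : MvPolynomial σ R →+* Polynomial (MvPolynomial σ R) :=
  eval₂Hom (Polynomial.C.comp C) fun i => Polynomial.C (X i) * Polynomial.X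

theorem scaleVars_monomial (u : σ →₀ ℕ) (r : R) :
    scaleVars (monomial u r) = Polynomial.C (monomial u r) * Polynomial.X ^ u.degree := by
  simp only [scaleVars, coe_eval₂Hom, eval₂_monomial, RingHom.coe_comp, Function.comp_apply,
    Finsupp.prod, mul_pow, Finset.prod_mul_distrib, ← map_pow, ← map_prod,
    Finset.prod_pow_eq_pow_sum]
  rw [← mul_assoc, ← map_mul, monomial_eq, Finsupp.prod, Finsupp.degree_apply]

theorem coeff_scaleVars (φ : MvPolynomial σ R) (k : ℕ) :
    (scaleVars φ).coeff k = homogeneousComponent k φ := by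
  classical
  induction φ using MvPolynomial.induction_on' with
  | monomial u r =>
    ext v
    rw [scaleVars_monomial, Polynomial.coeff_C_mul_X_pow, coeff_homogeneousComponent]
    by_cases huv : u = v
    · subst huv; split_ifs <;> simp_all
    · split_ifs <;> simp [coeff_monomial, huv]
  | add p q hp hq => simp [hp, hq]

theorem eval_one_scaleVars (φ : MvPolynomial σ R) : (scaleVars φ).eval 1 = φ := by
  have hC : (Polynomial.evalRingHom 1).comp (Polynomial.C.comp C) =
      (C : R →+* MvPolynomial σ R) := by
    ext; simp
  simp [scaleVars, polynomial_eval_eval₂, hC]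

theorem scaleVars_of_isHomogeneous {φ : MvPolynomial σ R} {n : ℕ} (hφ : φ.IsHomogeneous n) :
    scaleVars φ = Polynomial.C φ * Polynomial.X ^ n := by
  ext1 k
  rw [coeff_scaleVars, homogeneousComponent_of_mem hφ, Polynomial.coeff_C_mul_X_pow]

/-- A factor `ψ(T • X)` of the monomial `φ(X) T ^ n` in `T` is itself a monomial in `T`. -/
theorem IsHomogeneous.exists_isHomogeneous_of_dvd [IsDomain R] {φ ψ : MvPolynomial σ R} {n : ℕ}
    (hφ : φ.IsHomogeneous n) (hφ0 : φ ≠ 0) (hψ : ψ ∣ φ) : ∃ m, ψ.IsHomogeneous m := by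
  obtain ⟨χ, rfl⟩ := hψ
  have scaleVars_ne_zero {θ : MvPolynomial σ R} (hθ : θ ≠ 0) : scaleVars θ ≠ 0 :=
    fun h => hθ (by rw [← eval_one_scaleVars θ, h, Polynomial.eval_zero])
  have hmul : scaleVars ψ * scaleVars χ = Polynomial.C (ψ * χ) * Polynomial.X ^ n := by
    rw [← map_mul, scaleVars_of_isHomogeneous hφ]
  refine ⟨(scaleVars ψ).natDegree, fun u hu => ?_⟩
  by_contra hne
  have hzero := Polynomial.coeff_eq_zero_of_mul_eq_C_mul_X_pow hmul
    (scaleVars_ne_zero (left_ne_zero_of_mul hφ0)) (scaleVars_ne_zero (right_ne_zero_of_mul hφ0))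
    (k := u.degree) (by rwa [Finsupp.degree_eq_weight_one])
  rw [coeff_scaleVars] at hzero
  simpa [coeff_homogeneousComponent, hu] using congrArg (coeff u) hzero

theorem IsHomogeneous.exists_eq_C_of_mul [IsDomain R] {φ c : MvPolynomial σ R} {n : ℕ}
    (hφ : φ.IsHomogeneous n) (hφ0 : φ ≠ 0) (hcφ : (c * φ).IsHomogeneous n) :
    ∃ γ, c = C γ := by
  rcases eq_or_ne c 0 with rfl | hc
  · exact ⟨0, C_0.symm⟩
  obtain ⟨m, hm⟩ := hcφ.exists_isHomogeneous_of_dvd (mul_ne_zero hc hφ0) (dvd_mul_right c φ)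
  have : m + n = n := (hm.mul hφ).inj_right hcφ (mul_ne_zero hc hφ0)
  obtain rfl : m = 0 := by omega
  exact ⟨_, totalDegree_eq_zero_iff_eq_C.mp (Nat.le_zero.mp hm.totalDegree_le)⟩

end Homogeneous

variable {K : Type*} [Field K]

theorem IsHomogeneous.pos_of_irreducible {π : MvPolynomial σ K} {m : ℕ}
    (hπ : π.IsHomogeneous m) (hirr : Irreducible π) : 0 < m := by
  rw [Nat.pos_iff_ne_zero]
  rintro rfl
  have hC := totalDegree_eq_zero_iff_eq_C.mp (Nat.le_zero.mp hπ.totalDegree_le)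
  have h0 : coeff 0 π ≠ 0 := fun h => hirr.ne_zero (by rw [hC, h, C_0])
  exact hirr.not_isUnit (hC ▸ (isUnit_iff_ne_zero.mpr h0).map C)

noncomputable def restrictLine (φ : MvPolynomial σ K) (v w : σ → K) : Polynomial K :=
  eval₂ Polynomial.C (fun i => Polynomial.C (v i) + Polynomial.C (w i) * Polynomial.X) φ

theorem eval_restrictLine (φ : MvPolynomial σ K) (v w : σ → K) (s : K) :
    (restrictLine φ v w).eval s = eval (v + s • w) φ := by
  have hid : (Polynomial.evalRingHom s).comp Polynomial.C = RingHom.id K := by ext; simp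
  rw [restrictLine, polynomial_eval_eval₂, hid]
  congr 1
  funext i
  simp only [Polynomial.eval_add, Polynomial.eval_mul, Polynomial.eval_C, Polynomial.eval_X,
    Pi.add_apply, Pi.smul_apply, smul_eq_mul, mul_comm]

variable [Fintype σ]

theorem IsHomogeneous.eval_rep_mk_eq_zero_iff {φ : MvPolynomial σ K} {n : ℕ}
    (hφ : φ.IsHomogeneous n) {v : σ → K} (hv : v ≠ 0) :
    eval (Projectivization.mk K v hv).rep φ = 0 ↔ eval v φ = 0 := by
  obtain ⟨a, ha⟩ := Projectivization.exists_smul_eq_mk_rep K v hv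
  rw [← ha, Units.smul_def, hφ.eval_smul, mul_eq_zero, or_iff_right (pow_ne_zero _ a.ne_zero)]

/-- `s ↦ φ(v + s • w)` is not constant, since `φ(w + u • v) = u ^ n φ(v + u⁻¹ • w)` takes the
value `φ(w) ≠ 0` at `u = 0`. -/
theorem IsHomogeneous.exists_eval_add_smul_eq_zero [IsAlgClosed K] {φ : MvPolynomial σ K}
    {n : ℕ} (hφ : φ.IsHomogeneous n) (hn : n ≠ 0) {w : σ → K} (hw : eval w φ ≠ 0) (v : σ → K) :
    ∃ s : K, eval (v + s • w) φ = 0 := by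
  suffices hdeg : (restrictLine φ v w).degree ≠ 0 by
    obtain ⟨s, hs⟩ := IsAlgClosed.exists_root _ hdeg
    exact ⟨s, by rwa [← eval_restrictLine]⟩
  intro hdeg
  obtain ⟨c, hc⟩ : ∃ c, restrictLine φ v w = Polynomial.C c :=
    ⟨_, Polynomial.eq_C_of_degree_eq_zero hdeg⟩
  have hrev : restrictLine φ w v = Polynomial.C c * Polynomial.X ^ n := by
    refine Polynomial.eq_of_infinite_eval_eq _ _ <| (Set.infinite_of_finite_compl (s := {0}ᶜ)
      (by simp)).mono fun u (hu : u ≠ 0) => ?_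
    have : w + u • v = u • (v + u⁻¹ • w) := by
      rw [smul_add, smul_smul, mul_inv_cancel₀ hu, one_smul, add_comm]
    rw [Set.mem_ofPred_eq, eval_restrictLine, this, hφ.eval_smul, ← eval_restrictLine, hc]
    simp only [Polynomial.eval_C, Polynomial.eval_mul, Polynomial.eval_pow, Polynomial.eval_X]
    ring
  apply hw
  simpa [eval_restrictLine, zero_pow hn] using congrArg (Polynomial.eval 0) hrev

/-- The zeros are found on the lines joining a point `w` with `φ(w) ≠ 0` to the points of the
line `{x₀ = 0}`; the condition `w₀ ≠ 0` makes them pairwise distinct. -/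
theorem IsHomogeneous.infinite_setOf_eval_rep_eq_zero [IsAlgClosed K]
    {φ : MvPolynomial (Fin 3) K} {n : ℕ} (hφ : φ.IsHomogeneous n) (hn : n ≠ 0) (hφ0 : φ ≠ 0) :
    {x : Projectivization K (Fin 3 → K) | eval x.rep φ = 0}.Infinite := by
  obtain ⟨w, hw⟩ : ∃ w, eval w (φ * X 0) ≠ 0 := by
    by_contra! h
    exact mul_ne_zero hφ0 (X_ne_zero 0) (MvPolynomial.funext fun w => by simp [h w])
  rw [map_mul, eval_X, mul_ne_zero_iff] at hw
  choose s hs using fun t : K => hφ.exists_eval_add_smul_eq_zero hn hw.1 ![0, 1, t]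
  set z : K → Fin 3 → K := fun t => ![0, 1, t] + s t • w
  have hz (t : K) : z t ≠ 0 := by
    intro h
    have h0 := congrFun h 0
    have h1 := congrFun h 1
    simp only [z, Pi.add_apply, Pi.smul_apply, smul_eq_mul, cons_val_zero, cons_val_one,
      Pi.zero_apply, zero_add, mul_eq_zero, hw.2, or_false] at h0 h1
    simp [h0] at h1
  refine Set.infinite_of_injective_forall_mem (f := fun t => Projectivization.mk K (z t) (hz t))
    (fun t t' htt' => ?_) fun t => (hφ.eval_rep_mk_eq_zero_iff (hz t)).mpr (hs t)
  obtain ⟨a, ha⟩ := (Projectivization.mk_eq_mk_iff' K _ _ (hz t) (hz t')).mp htt'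
  have h0 := congrFun ha 0
  have h1 := congrFun ha 1
  have h2 := congrFun ha 2
  simp only [z, Pi.add_apply, Pi.smul_apply, smul_eq_mul, cons_val_zero, cons_val_one,
    cons_val_two, tail_cons, head_cons, zero_add] at h0 h1 h2
  have hs : a * s t' = s t := mul_right_cancel₀ hw.2 (by linear_combination h0)
  have ha : a = 1 := by linear_combination h1 - w 1 * hs
  linear_combination -h2 + w 2 * hs + t' * ha

theorem isUnit_of_forall_dvd_of_finite_setOf_eval_rep_eq_zero [IsAlgClosed K] {ι : Type*}
    {s : ι → MvPolynomial (Fin 3) K} (hs : ∀ i, ∃ n, (s i).IsHomogeneous n)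
    (hfin : {x : Projectivization K (Fin 3 → K) | ∀ i, eval x.rep (s i) = 0}.Finite)
    (d : MvPolynomial (Fin 3) K) (hd : ∀ i, d ∣ s i) : IsUnit d := by
  by_contra hdu
  obtain ⟨π, m, hπ, hm, hπ0, hπs⟩ :
      ∃ π m, π.IsHomogeneous m ∧ m ≠ 0 ∧ π ≠ 0 ∧ ∀ i, π ∣ s i := by
    by_cases hs0 : ∀ i, s i = 0
    · exact ⟨X 0, 1, isHomogeneous_X _ _, one_ne_zero, X_ne_zero _, fun i => by simp [hs0 i]⟩
    obtain ⟨i, hi⟩ := not_forall.mp hs0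
    have hd0 : d ≠ 0 := by rintro rfl; exact hi (zero_dvd_iff.mp (hd i))
    obtain ⟨π, hirr, hπd⟩ := WfDvdMonoid.exists_irreducible_factor hdu hd0
    obtain ⟨n, hn⟩ := hs i
    obtain ⟨m, hm⟩ := hn.exists_isHomogeneous_of_dvd hi (hπd.trans (hd i))
    exact ⟨π, m, hm, (hm.pos_of_irreducible hirr).ne', hirr.ne_zero, fun j => hπd.trans (hd j)⟩
  refine (hπ.infinite_setOf_eval_rep_eq_zero hm hπ0).mono (fun x hx i => ?_) hfin
  obtain ⟨q, hq⟩ := hπs i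
  rw [Set.mem_ofPred_eq] at hx
  rw [hq, map_mul, hx, zero_mul]

theorem exists_eq_C_smul_cross_of_dotProduct_eq_zero [IsAlgClosed K]
    {u₁ u₂ v : Fin 3 → MvPolynomial (Fin 3) K} {n : Fin 3 → ℕ}
    (hu : ∀ i, ((u₁ ⨯₃ u₂) i).IsHomogeneous (n i)) (hv : ∀ i, (v i).IsHomogeneous (n i))
    (hfin : {x : Projectivization K (Fin 3 → K) | ∀ i, eval x.rep ((u₁ ⨯₃ u₂) i) = 0}.Finite)
    (h₁ : u₁ ⬝ᵥ v = 0) (h₂ : v ⬝ᵥ u₂ = 0) :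
    ∃ γ : K, v = (C γ : MvPolynomial (Fin 3) K) • u₁ ⨯₃ u₂ := by
  have hprim := isUnit_of_forall_dvd_of_finite_setOf_eval_rep_eq_zero (fun i => ⟨_, hu i⟩) hfin
  have hcross : v ⨯₃ (u₁ ⨯₃ u₂) = 0 := by
    rw [cross_cross_eq_smul_sub_smul', h₁, h₂, zero_smul, zero_smul, sub_zero]
  obtain ⟨c, hc⟩ := exists_eq_smul_of_mul_eq_mul hprim (mul_eq_mul_of_cross_eq_zero hcross)
  obtain ⟨i, hi⟩ := exists_ne_zero_of_forall_dvd_isUnit hprim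
  obtain ⟨γ, rfl⟩ := (hu i).exists_eq_C_of_mul hi (congrFun hc i ▸ hv i)
  exact ⟨γ, hc⟩

end MvPolynomial

theorem syzygy_of_two_conics
    (F G : MvPolynomial (Fin 3) ℂ)
    (hF : F.IsHomogeneous 2) (hG : G.IsHomogeneous 2)
    (a b : ℂ)
    (hfin : {x : Projectivization ℂ (Fin 3 → ℂ) |
        eval x.rep (pderiv 0 F * pderiv 1 G - pderiv 1 F * pderiv 0 G) = 0 ∧
        eval x.rep (pderiv 0 F * (C b * G) - pderiv 0 G * (C a * F)) = 0 ∧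
        eval x.rep (pderiv 1 F * (C b * G) - pderiv 1 G * (C a * F)) = 0}.Finite) :
    ∀ A B C' : MvPolynomial (Fin 3) ℂ,
      A.IsHomogeneous 3 → B.IsHomogeneous 3 → C'.IsHomogeneous 2 →
      A * pderiv 0 F + B * pderiv 1 F + C' * (C a * F) = 0 →
      A * pderiv 0 G + B * pderiv 1 G + C' * (C b * G) = 0 →
      ∃ c : ℂ,
        A = C c * (pderiv 1 F * (C b * G) - pderiv 1 G * (C a * F)) ∧
        B = -(C c * (pderiv 0 F * (C b * G) - pderiv 0 G * (C a * F))) ∧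
        C' = C c * (pderiv 0 F * pderiv 1 G - pderiv 1 F * pderiv 0 G) := by
  intro A B C' hA hB hC' e₁ e₂
  set u₁ : Fin 3 → MvPolynomial (Fin 3) ℂ := ![pderiv 0 F, pderiv 1 F, C a * F]
  set u₂ : Fin 3 → MvPolynomial (Fin 3) ℂ := ![pderiv 0 G, pderiv 1 G, C b * G]
  have hF' (j : Fin 3) : (pderiv j F).IsHomogeneous 1 := hF.pderiv
  have hG' (j : Fin 3) : (pderiv j G).IsHomogeneous 1 := hG.pderiv
  have hu (i : Fin 3) : ((u₁ ⨯₃ u₂) i).IsHomogeneous (![3, 3, 2] i) := by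
    fin_cases i
    exacts [((hF' 1).mul (hG.C_mul b)).sub ((hF.C_mul a).mul (hG' 1)),
      ((hF.C_mul a).mul (hG' 0)).sub ((hF' 0).mul (hG.C_mul b)),
      ((hF' 0).mul (hG' 1)).sub ((hF' 1).mul (hG' 0))]
  have hv (i : Fin 3) : (![A, B, C'] i).IsHomogeneous (![3, 3, 2] i) := by
    fin_cases i <;> assumption
  have hminors : {x : Projectivization ℂ (Fin 3 → ℂ) |
      ∀ i, eval x.rep ((u₁ ⨯₃ u₂) i) = 0}.Finite := hfin.subset fun x hx => by
    obtain ⟨h₀, h₁, h₂⟩ : _ ∧ _ ∧ _ := ⟨hx 0, hx 1, hx 2⟩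
    simp only [u₁, u₂, cross_apply, cons_val, map_sub, map_mul] at h₀ h₁ h₂ ⊢
    exact ⟨by linear_combination h₂, by linear_combination -h₁, by linear_combination h₀⟩
  have h₁ : u₁ ⬝ᵥ ![A, B, C'] = 0 := by
    simp only [u₁, vec3_dotProduct, cons_val]
    linear_combination e₁
  have h₂ : ![A, B, C'] ⬝ᵥ u₂ = 0 := by
    simp only [u₂, vec3_dotProduct, cons_val]
    linear_combination e₂
  obtain ⟨γ, hγ⟩ := exists_eq_C_smul_cross_of_dotProduct_eq_zero hu hv hminors h₁ h₂
  obtain ⟨hγA, hγB, hγC⟩ : A = _ ∧ B = _ ∧ C' = _ :=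
    ⟨congrFun hγ 0, congrFun hγ 1, congrFun hγ 2⟩
  simp only [u₁, u₂, cross_apply, Pi.smul_apply, smul_eq_mul, cons_val] at hγA hγB hγC
  exact ⟨γ, by rw [hγA]; ring, by rw [hγB]; ring, hγC⟩
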